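/- arXiv:1102.1478 — 10 statements merged into one kernel-verified Lean document; each statement's English description precedes it below -/
import Mathlib

section
/- The fixed point set of R is the diagonal of 𝐗: Fix R = {(x,x,…,x) ∈ 𝐗 : x ∈ X}, i.e. x = (x_i)_{i∈I} satisfies Rx = x if and only if all coordinates x_i are equal. -/
/-!
Writing `μᵢ = 1 - λᵢ`, the `i`-th fixed-point equation `μᵢ xᵢ = ∑_{j ≠ i} λⱼ xⱼ` says exactly
that `xᵢ` equals the weighted mean `∑ⱼ λⱼ xⱼ`. So a fixed point has all coordinates equal to that
mean, and conversely a constant vector is its own weighted mean because the weights sum to `1`.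
-/

open Finset

section WeightedMean

variable {𝕜 E ι : Type*} [Field 𝕜] [AddCommGroup E] [Module 𝕜 E] [Fintype ι]

theorem eq_sum_erase_div_one_sub_smul_iff [DecidableEq ι] {lam : ι → 𝕜} {x : ι → E} {i : ι}
    (hi : lam i ≠ 1) :
    x i = ∑ j ∈ univ.erase i, (lam j / (1 - lam i)) • x j ↔ x i = ∑ j, lam j • x j := by
  have hne : 1 - lam i ≠ 0 := sub_ne_zero.mpr hi.symm
  simp only [div_eq_inv_mul, ← smul_smul, ← smul_sum]
  rw [eq_inv_smul_iff₀ hne, sub_smul, one_smul, sub_eq_iff_eq_add',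
    ← add_sum_erase _ _ (mem_univ i)]

theorem forall_eq_sum_smul_iff_exists_const {lam : ι → 𝕜} (hsum : ∑ i, lam i = 1) (x : ι → E) :
    (∀ i, x i = ∑ j, lam j • x j) ↔ ∃ z, ∀ i, x i = z := by
  refine ⟨fun h => ⟨_, h⟩, ?_⟩
  rintro ⟨z, hz⟩ i
  simp only [hz, ← sum_smul, hsum, one_smul]

end WeightedMean

theorem fixedPoints_R_eq_diagonal_general
    {X : Type*} [NormedAddCommGroup X] [InnerProductSpace ℝ X]
    (m : ℕ)
    (lam : Fin m → ℝ) (hlam : ∀ i, lam i ∈ Set.Ioo (0 : ℝ) 1)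
    (hsum : ∑ i, lam i = 1)
    (mu : Fin m → ℝ) (hmu : ∀ i, mu i = 1 - lam i)
    (x : Fin m → X) :
    (∀ i, x i = ∑ j ∈ Finset.univ.erase i, (lam j / mu i) • x j) ↔ ∃ z, ∀ i, x i = z := by
  simp only [hmu]
  rw [← forall_eq_sum_smul_iff_exists_const hsum x]
  exact forall_congr' fun i => eq_sum_erase_div_one_sub_smul_iff (hlam i).2.ne

/-- The fixed point set of `R` is the diagonal:
`x = R x` if and only if all coordinates of `x` are equal. -/
theorem fixedPoints_R_eq_diagonal
    {X : Type*} [NormedAddCommGroup X] [InnerProductSpace ℝ X]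
    (m : ℕ) (hm : 2 ≤ m)
    (lam : Fin m → ℝ) (hlam : ∀ i, lam i ∈ Set.Ioo (0 : ℝ) 1)
    (hsum : ∑ i, lam i = 1)
    (mu : Fin m → ℝ) (hmu : ∀ i, mu i = 1 - lam i)
    (x : Fin m → X) :
    (∀ i, x i = ∑ j ∈ Finset.univ.erase i, (lam j / mu i) • x j) ↔ ∃ z, ∀ i, x i = z :=
  fixedPoints_R_eq_diagonal_general m lam hlam hsum mu hmu x
end

section
/- Suppose m ≥ 3 and X ≠ {0}. Then R is self-adjoint (R* = R) if and only if λ_i = 1/m for every i ∈ I. -/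
/-! Testing `R x = R* x` on vectors supported at one coordinate reduces it to the scalar
identities `λ i / μ j = λ j / μ i`, i.e. `λ i (1 - λ i) = λ j (1 - λ j)`, for `i ≠ j`.
Since `t ↦ t (1 - t)` identifies `t` only with itself and `1 - t`, and a third positive weight
forces `λ i + λ j < 1`, all the weights coincide. -/

theorem forall_sum_erase_smul_eq_iff {ι R M : Type*} [Fintype ι] [DecidableEq ι] [DivisionRing R]
    [AddCommGroup M] [Module R M] [Nontrivial M] (a b : ι → ι → R) :
    (∀ (x : ι → M) (i : ι), ∑ j ∈ Finset.univ.erase i, a i j • x j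
        = ∑ j ∈ Finset.univ.erase i, b i j • x j) ↔ ∀ i j, j ≠ i → a i j = b i j := by
  refine ⟨fun h i j hji => ?_, fun h x i => Finset.sum_congr rfl fun j hj => ?_⟩
  · obtain ⟨v, hv⟩ := exists_ne (0 : M)
    have hsingle := h (Pi.single j v) i
    simp only [Pi.single_apply, smul_ite, smul_zero, Finset.sum_ite_eq', Finset.mem_erase,
      Finset.mem_univ, and_true, if_pos hji] at hsingle
    exact smul_left_injective R hv hsingle
  · rw [h i j (Finset.ne_of_mem_erase hj)]

theorem add_lt_one_of_three_le_card {ι : Type*} [Fintype ι] {w : ι → ℝ} (hw : ∀ i, 0 < w i)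
    (hsum : ∑ i, w i = 1) (hcard : 3 ≤ Fintype.card ι) {i j : ι} (hij : i ≠ j) :
    w i + w j < 1 := by
  classical
  obtain ⟨k, hk_mem, hk⟩ := Finset.exists_mem_notMem_of_card_lt_card
    (s := {i, j}) (t := Finset.univ) (Finset.card_le_two.trans_lt (by rw [Finset.card_univ]; omega))
  rw [← Finset.sum_pair hij, ← hsum]
  exact Finset.sum_lt_sum_of_subset (Finset.subset_univ _) hk_mem hk (hw k)
    fun l _ _ => (hw l).le

theorem eq_of_mul_one_sub_eq {R : Type*} [CommRing R] [NoZeroDivisors R] {a b : R}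
    (h : a * (1 - a) = b * (1 - b)) (hab : a + b ≠ 1) : a = b := by
  have hfactor : (a - b) * (1 - (a + b)) = 0 := by linear_combination h
  rcases mul_eq_zero.1 hfactor with hdiff | hsum
  · exact sub_eq_zero.1 hdiff
  · exact absurd (sub_eq_zero.1 hsum).symm hab

theorem eq_one_div_card_of_forall_eq {ι : Type*} [Fintype ι] {w : ι → ℝ}
    (hw : ∀ i j, w i = w j) (hsum : ∑ i, w i = 1) (i : ι) : w i = 1 / Fintype.card ι := by
  have hsum' : Fintype.card ι * w i = 1 := by
    rw [← hsum, Finset.sum_congr rfl fun j _ => hw j i]; simp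
  have hcard : (Fintype.card ι : ℝ) ≠ 0 := left_ne_zero_of_mul_eq_one hsum'
  field_simp; linarith

theorem forall_div_one_sub_symm_iff {ι : Type*} [Fintype ι] (hcard : 3 ≤ Fintype.card ι)
    {w : ι → ℝ} (hw : ∀ i, w i ∈ Set.Ioo (0 : ℝ) 1) (hsum : ∑ i, w i = 1) :
    (∀ i j, j ≠ i → w i / (1 - w j) = w j / (1 - w i)) ↔ ∀ i, w i = 1 / Fintype.card ι := by
  have hcompl : ∀ i, 1 - w i ≠ 0 := fun i => (sub_pos.2 (hw i).2).ne'
  constructor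
  · intro h
    refine eq_one_div_card_of_forall_eq (fun i j => ?_) hsum
    rcases eq_or_ne j i with rfl | hji
    · rfl
    have hmul : w i * (1 - w i) = w j * (1 - w j) := by
      have := h i j hji
      rw [div_eq_div_iff (hcompl j) (hcompl i)] at this
      linarith
    exact eq_of_mul_one_sub_eq hmul
      (add_lt_one_of_three_le_card (fun k => (hw k).1) hsum hcard hji.symm).ne
  · intro h i j _
    rw [h i, h j]

/-- For `m ≥ 3` and `X ≠ {0}`, the operator `R` is self-adjoint
(`R* = R`) if and only if `λ i = 1/m` for every `i`. -/
theorem R_selfAdjoint_iff_equal_weights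
    {X : Type*} [NormedAddCommGroup X] [InnerProductSpace ℝ X] [Nontrivial X]
    (m : ℕ) (hm : 3 ≤ m)
    (lam : Fin m → ℝ) (hlam : ∀ i, lam i ∈ Set.Ioo (0 : ℝ) 1)
    (hsum : ∑ i, lam i = 1)
    (mu : Fin m → ℝ) (hmu : ∀ i, mu i = 1 - lam i) :
    (∀ (x : Fin m → X) (i : Fin m),
        ∑ j ∈ Finset.univ.erase i, (lam i / mu j) • x j
          = ∑ j ∈ Finset.univ.erase i, (lam j / mu i) • x j)
      ↔ ∀ i, lam i = 1 / m := by
  obtain rfl : mu = fun i => 1 - lam i := funext hmu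
  rw [forall_sum_erase_smul_eq_iff (fun i j => lam i / (1 - lam j)) fun i j => lam j / (1 - lam i)]
  simpa using forall_div_one_sub_symm_iff (by simpa using hm) hlam hsum
end

section
/- Suppose m ≥ 3 and λ_i = 1/m for every i ∈ I. Then R is nonexpansive, i.e. ‖Rx‖ ≤ ‖x‖ for every x ∈ 𝐗; moreover, if X ≠ {0}, the operator norm of R equals 1. -/
/-!
Equal weights make every coefficient `λ_j / μ_i` equal to `1 / (m - 1)`, so `(R x)_i` is
`(S - x_i) / (m - 1)` with `S = ∑ x_j`. Expanding the squares,
`∑ ‖S - x_i‖² = (m - 2) ‖S‖² + ‖x‖²`, and Cauchy–Schwarz `‖S‖² ≤ m ‖x‖²` bounds this by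
`(m - 1)² ‖x‖²`. The constant vector `(v, …, v)` is fixed by `R`, so the bound `1` is attained.
-/

open Finset

namespace ContinuousLinearMap

variable {𝕜 E : Type*} [NontriviallyNormedField 𝕜] [NormedAddCommGroup E] [NormedSpace 𝕜 E]

theorem opNorm_eq_one_of_apply_eq_self {T : E →L[𝕜] E} (hT : ∀ y, ‖T y‖ ≤ ‖y‖) {x : E}
    (hx : x ≠ 0) (hTx : T x = x) : ‖T‖ = 1 := by
  refine le_antisymm (T.opNorm_le_bound zero_le_one fun y => by simpa using hT y) ?_
  have h := T.le_opNorm x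
  rw [hTx] at h
  exact le_of_mul_le_mul_right (by simpa using h) (norm_pos_iff.mpr hx)

end ContinuousLinearMap

theorem norm_sq_sum_le_card_mul_sum_norm_sq {ι E : Type*} [Fintype ι] [SeminormedAddCommGroup E]
    (x : ι → E) : ‖∑ i, x i‖ ^ 2 ≤ Fintype.card ι * ∑ i, ‖x i‖ ^ 2 :=
  calc ‖∑ i, x i‖ ^ 2 ≤ (∑ i, ‖x i‖) ^ 2 := by gcongr; exact norm_sum_le _ _
    _ ≤ Fintype.card ι * ∑ i, ‖x i‖ ^ 2 := by
      simpa using sq_sum_le_card_mul_sum_sq (s := univ) (f := fun i => ‖x i‖)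

section InnerProductSpace

variable {ι E : Type*} [Fintype ι] [NormedAddCommGroup E] [InnerProductSpace ℝ E]

theorem sum_norm_sq_sum_sub_self (x : ι → E) :
    ∑ i, ‖(∑ j, x j) - x i‖ ^ 2
      = (Fintype.card ι - 2 : ℝ) * ‖∑ j, x j‖ ^ 2 + ∑ i, ‖x i‖ ^ 2 := by
  simp only [norm_sub_sq_real, sum_add_distrib, sum_sub_distrib, ← mul_sum, ← inner_sum,
    real_inner_self_eq_norm_sq, sum_const, card_univ, nsmul_eq_mul]
  ring

theorem sum_norm_sq_sum_sub_self_le (x : ι → E) :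
    ∑ i, ‖(∑ j, x j) - x i‖ ^ 2 ≤ (Fintype.card ι - 1 : ℝ) ^ 2 * ∑ i, ‖x i‖ ^ 2 := by
  rcases le_or_gt 2 (Fintype.card ι) with hcard | hcard
  · have hcard' : (2 : ℝ) ≤ Fintype.card ι := by exact_mod_cast hcard
    rw [sum_norm_sq_sum_sub_self]
    nlinarith [norm_sq_sum_le_card_mul_sum_norm_sq x]
  · have : Subsingleton ι := Fintype.card_le_one_iff_subsingleton.mp (by omega)
    rw [sum_eq_zero fun i _ => by rw [Fintype.sum_subsingleton x i, sub_self, norm_zero]; ring]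
    positivity

end InnerProductSpace

namespace PiLp

variable {ι E : Type*} [Fintype ι] [DecidableEq ι]

def sumOthers [AddCommMonoid E] (x : PiLp 2 (fun _ : ι => E)) : PiLp 2 (fun _ : ι => E) :=
  WithLp.toLp 2 fun i => ∑ j ∈ univ.erase i, x j

theorem sumOthers_apply [AddCommMonoid E] (x : PiLp 2 (fun _ : ι => E)) (i : ι) :
    sumOthers x i = ∑ j ∈ univ.erase i, x j :=
  rfl

theorem sumOthers_const [AddCommGroup E] [Module ℝ E] (v : E) :
    sumOthers (WithLp.toLp 2 fun _ : ι => v)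
      = ((Fintype.card ι : ℝ) - 1) • WithLp.toLp 2 fun _ => v := by
  ext i
  rw [sumOthers_apply, sum_erase_eq_sub (mem_univ i), sum_const, card_univ, sub_smul, one_smul,
    Nat.cast_smul_eq_nsmul]
  rfl

theorem norm_sumOthers_le [NormedAddCommGroup E] [InnerProductSpace ℝ E]
    (x : PiLp 2 (fun _ : ι => E)) : ‖sumOthers x‖ ≤ |(Fintype.card ι : ℝ) - 1| * ‖x‖ := by
  have hsq : ‖sumOthers x‖ ^ 2 ≤ ((Fintype.card ι - 1 : ℝ) * ‖x‖) ^ 2 := by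
    simp only [norm_sq_eq_of_L2, sumOthers_apply, sum_erase_eq_sub (mem_univ _), mul_pow]
    exact sum_norm_sq_sum_sub_self_le _
  simpa [abs_mul] using sq_le_sq.mp hsq

end PiLp

/-- If `m ≥ 3` and `λ i = 1/m` for every `i`, then `R` is nonexpansive;
moreover, if `X ≠ {0}`, then the operator norm of `R` equals `1`. -/
theorem R_nonexpansive_of_equal_weights
    {X : Type*} [NormedAddCommGroup X] [InnerProductSpace ℝ X]
    (m : ℕ) (hm : 3 ≤ m)
    (lam : Fin m → ℝ) (hlam : ∀ i, lam i = 1 / m)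
    (mu : Fin m → ℝ) (hmu : ∀ i, mu i = 1 - lam i)
    (R : PiLp 2 (fun _ : Fin m => X) →L[ℝ] PiLp 2 (fun _ : Fin m => X))
    (hR : ∀ x i, R x i = ∑ j ∈ Finset.univ.erase i, (lam j / mu i) • x j) :
    (∀ x, ‖R x‖ ≤ ‖x‖) ∧ (Nontrivial X → ‖R‖ = 1) := by
  have hm1 : (0 : ℝ) < m - 1 := by
    rw [sub_pos]; exact_mod_cast (by omega : 1 < m)
  have hcoef : ∀ i j, lam j / mu i = ((m : ℝ) - 1)⁻¹ := by
    intro i j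
    rw [hmu, hlam, hlam]
    field_simp
  have hRx : ∀ x, R x = ((m : ℝ) - 1)⁻¹ • PiLp.sumOthers x := by
    intro x
    ext i
    simp only [hR, hcoef, ← smul_sum, PiLp.smul_apply, PiLp.sumOthers_apply]
  have hR1 : ∀ x, ‖R x‖ ≤ ‖x‖ := fun x =>
    calc ‖R x‖ = ((m : ℝ) - 1)⁻¹ * ‖PiLp.sumOthers x‖ := by
          rw [hRx, norm_smul, Real.norm_of_nonneg (inv_pos.mpr hm1).le]
      _ ≤ ((m : ℝ) - 1)⁻¹ * ((m - 1) * ‖x‖) := by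
          gcongr
          simpa [abs_of_pos hm1] using PiLp.norm_sumOthers_le x
      _ = ‖x‖ := by field_simp
  refine ⟨hR1, fun _ => ?_⟩
  obtain ⟨v, hv⟩ := exists_ne (0 : X)
  refine R.opNorm_eq_one_of_apply_eq_self hR1 (x := WithLp.toLp 2 fun _ => v) ?_ ?_
  · have : NeZero m := ⟨by omega⟩
    simpa [funext_iff] using hv
  · rw [hRx, PiLp.sumOthers_const, smul_smul, Fintype.card_fin, inv_mul_cancel₀ hm1.ne', one_smul]
end

section
/- Suppose m ≥ 3 and X ≠ {0}. If R is nonexpansive, i.e. ‖Rx‖ ≤ ‖x‖ for every x ∈ 𝐗, then λ_i = 1/m for every i ∈ I. -/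
/-!
The operator `R` fixes every constant vector `c = (u, …, u)`, because `∑_{j ≠ i} λ_j = μ_i`.
A linear contraction `T` with `T c = c` also satisfies `⟪T x, c⟫ = ⟪x, c⟫`: the quadratic
`t ↦ ‖c + t x‖² - ‖T (c + t x)‖²` is nonnegative and vanishes at `t = 0`, so its linear
coefficient vanishes. Testing this against `x = e_k u` gives `λ_k ∑_{i ≠ k} 1/μ_i = 1`, which
forces `λ_k μ_k = λ_k (1 - λ_k)` to be independent of `k`. Two distinct weights with the same
value of `λ (1 - λ)` sum to `1`, which is impossible once a third positive weight exists.
-/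

open Finset

theorem LinearMap.inner_map_left_eq_of_norm_map_le {E : Type*} [NormedAddCommGroup E]
    [InnerProductSpace ℝ E] (T : E →ₗ[ℝ] E) (hT : ∀ x, ‖T x‖ ≤ ‖x‖) {c : E} (hc : T c = c)
    (x : E) : inner ℝ (T x) c = inner ℝ x c := by
  rw [real_inner_comm c, real_inner_comm c]
  have hquad : ∀ t : ℝ, 0 ≤ (‖x‖ ^ 2 - ‖T x‖ ^ 2) * (t * t)
      + 2 * (inner ℝ c x - inner ℝ c (T x)) * t + 0 := by
    intro t
    have h := pow_le_pow_left₀ (norm_nonneg _) (hT (c + t • x)) 2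
    rw [map_add, map_smul, hc, norm_add_sq_real, norm_add_sq_real, real_inner_smul_right,
      real_inner_smul_right, norm_smul, norm_smul, mul_pow, mul_pow, Real.norm_eq_abs, sq_abs] at h
    nlinarith
  have h := discrim_le_zero hquad
  rw [discrim] at h
  nlinarith [sq_nonneg (inner ℝ c x - inner ℝ c (T x))]

theorem PiLp.isLinearMap_of_apply_eq_sum {ι X : Type*} [NormedAddCommGroup X] [NormedSpace ℝ X]
    {s : ι → Finset ι} {w : ι → ι → ℝ} {R : PiLp 2 (fun _ : ι => X) → PiLp 2 (fun _ : ι => X)}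
    (hR : ∀ x i, R x i = ∑ j ∈ s i, w i j • x j) : IsLinearMap ℝ R where
  map_add x y := PiLp.ext fun i => by
    simp only [hR, PiLp.add_apply, smul_add, sum_add_distrib]
  map_smul a x := PiLp.ext fun i => by
    simp only [hR, PiLp.smul_apply, smul_comm _ a, smul_sum]

section

variable {ι : Type*} [Fintype ι] [DecidableEq ι]

theorem PiLp.inner_single_const {X : Type*} [NormedAddCommGroup X] [InnerProductSpace ℝ X]
    (k : ι) (u : X) : inner ℝ (PiLp.single 2 k u) (WithLp.toLp 2 fun _ : ι => u) = ‖u‖ ^ 2 := by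
  simp [PiLp.inner_apply, PiLp.single_apply, apply_ite (inner ℝ · u)]

variable {X : Type*} [NormedAddCommGroup X] [InnerProductSpace ℝ X] {lam mu : ι → ℝ}
  {R : PiLp 2 (fun _ : ι => X) → PiLp 2 (fun _ : ι => X)}
  (hR : ∀ x i, R x i = ∑ j ∈ univ.erase i, (lam j / mu i) • x j)
include hR

theorem map_const_eq_const (hsum : ∑ i, lam i = 1) (hmu : ∀ i, mu i = 1 - lam i)
    (hmu0 : ∀ i, mu i ≠ 0) (u : X) :
    R (WithLp.toLp 2 fun _ => u) = WithLp.toLp 2 fun _ => u := by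
  refine PiLp.ext fun i => ?_
  rw [hR, ← sum_smul, ← sum_div, sum_erase_eq_sub (mem_univ i), hsum, ← hmu, div_self (hmu0 i),
    one_smul]

theorem inner_map_single_const (k : ι) (u : X) :
    inner ℝ (R (PiLp.single 2 k u)) (WithLp.toLp 2 fun _ => u)
      = lam k * (∑ i ∈ univ.erase k, (mu i)⁻¹) * ‖u‖ ^ 2 := by
  simp only [PiLp.inner_apply, hR, PiLp.single_apply, smul_ite, smul_zero, sum_ite_eq', mem_erase,
    mem_univ, and_true, apply_ite (inner ℝ · u), inner_zero_left, real_inner_smul_left,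
    real_inner_self_eq_norm_sq]
  rw [← sum_filter, filter_ne, mul_sum, sum_mul]
  exact sum_congr rfl fun i _ => by ring

end

section

variable {ι : Type*} [Fintype ι] [DecidableEq ι] {lam : ι → ℝ}

theorem mul_one_sub_eq_of_mul_sum_erase_inv_eq_one (hlam : ∀ i, lam i ≠ 1)
    (h : ∀ k, lam k * ∑ i ∈ univ.erase k, (1 - lam i)⁻¹ = 1) (i j : ι) :
    lam i * (1 - lam i) = lam j * (1 - lam j) := by
  set T := ∑ i, (1 - lam i)⁻¹
  have hT : ∀ k, lam k * (1 - lam k) * T = 1 := fun k => by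
    have hk : 1 - lam k ≠ 0 := sub_ne_zero.2 (hlam k).symm
    have := h k
    rw [sum_erase_eq_sub (mem_univ k)] at this
    linear_combination (1 - lam k) * this + lam k * mul_inv_cancel₀ hk
  exact mul_right_cancel₀ (right_ne_zero_of_mul_eq_one (hT i)) ((hT i).trans (hT j).symm)

variable (hpos : ∀ i, 0 < lam i) (hsum : ∑ i, lam i = 1) (hcard : 3 ≤ Fintype.card ι)
include hpos hsum hcard

theorem add_lt_one_of_three_le_card_s10 {i j : ι} (hij : i ≠ j) : lam i + lam j < 1 := by
  obtain ⟨l, -, hl⟩ := exists_mem_notMem_of_card_lt_card (s := {i, j}) (t := univ)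
    (by rw [card_pair hij, card_univ]; omega)
  rw [← sum_pair hij, ← hsum]
  exact sum_lt_sum_of_subset (subset_univ _) (mem_univ l) hl (hpos l) fun k _ _ => (hpos k).le

theorem eq_one_div_card_of_mul_one_sub_eq
    (h : ∀ i j, lam i * (1 - lam i) = lam j * (1 - lam j)) (i : ι) :
    lam i = 1 / Fintype.card ι := by
  have hall : ∀ j, lam j = lam i := fun j => by
    obtain rfl | hji := eq_or_ne j i
    · rfl
    have hlt := add_lt_one_of_three_le_card_s10 hpos hsum hcard hji
    have hfac : (lam j - lam i) * (1 - lam j - lam i) = 0 := by linear_combination h j i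
    rcases mul_eq_zero.1 hfac with h' | h' <;> linarith
  have hcard_mul : Fintype.card ι * lam i = 1 := by
    rw [← hsum, sum_congr rfl fun j _ => hall j, sum_const, card_univ, nsmul_eq_mul]
  rw [eq_div_iff (by positivity)]
  linarith

end

/-- If `m ≥ 3`, `X ≠ {0}`, and `R` is nonexpansive (on `X^m` with the
Hilbert product norm), then `λ i = 1/m` for every `i`. -/
theorem equal_weights_of_R_nonexpansive
    {X : Type*} [NormedAddCommGroup X] [InnerProductSpace ℝ X] [Nontrivial X]
    (m : ℕ) (hm : 3 ≤ m)
    (lam : Fin m → ℝ) (hlam : ∀ i, lam i ∈ Set.Ioo (0 : ℝ) 1)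
    (hsum : ∑ i, lam i = 1)
    (mu : Fin m → ℝ) (hmu : ∀ i, mu i = 1 - lam i)
    (R : PiLp 2 (fun _ : Fin m => X) → PiLp 2 (fun _ : Fin m => X))
    (hR : ∀ x i, R x i = ∑ j ∈ Finset.univ.erase i, (lam j / mu i) • x j)
    (hne : ∀ x, ‖R x‖ ≤ ‖x‖) :
    ∀ i, lam i = 1 / m := by
  have hmu0 : ∀ i, mu i ≠ 0 := fun i => by rw [hmu i]; exact sub_ne_zero.2 (hlam i).2.ne'
  obtain ⟨u, hu⟩ := exists_ne (0 : X)
  have hinv_sum : ∀ k, lam k * ∑ i ∈ univ.erase k, (1 - lam i)⁻¹ = 1 := fun k => by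
    have h := ((PiLp.isLinearMap_of_apply_eq_sum hR).mk' R).inner_map_left_eq_of_norm_map_le hne
      (map_const_eq_const hR hsum hmu hmu0 u) (PiLp.single 2 k u)
    rw [IsLinearMap.mk'_apply, inner_map_single_const hR, PiLp.inner_single_const] at h
    simpa [hmu, hu] using h
  have hcard : 3 ≤ Fintype.card (Fin m) := by simpa using hm
  simpa using eq_one_div_card_of_mul_one_sub_eq (fun i => (hlam i).1) hsum hcard
    (mul_one_sub_eq_of_mul_sum_erase_inv_eq_one (fun i => (hlam i).2.ne) hinv_sum)
end

section
/- Suppose m ≥ 3 and λ_i = 1/m for every i ∈ I, and set α = m/(2m−2) and N = α^{-1}(R − (1−α)Id). Then N is a linear isometry of 𝐗 (that is, ‖Nx‖ = ‖x‖ for every x ∈ 𝐗); consequently R = (1−α)Id + αN is α-averaged with α = m/(2m−2) ∈ (0,1). -/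
open Finset

section

variable {ι E : Type*} [Fintype ι] [NormedAddCommGroup E] [InnerProductSpace ℝ E]

lemma sum_norm_sq_sub_const (s : E) (x : ι → E) :
    ∑ i, ‖s - x i‖ ^ 2 =
      Fintype.card ι * ‖s‖ ^ 2 - 2 * inner ℝ s (∑ i, x i) + ∑ i, ‖x i‖ ^ 2 := by
  simp only [norm_sub_sq_real, sum_add_distrib, sum_sub_distrib, sum_const, card_univ,
    nsmul_eq_mul, inner_sum, mul_sum]

/-- The reflection `2P - 1`, where `P` maps `x` to the constant family at the mean of the `x i`,
i.e. `P` is the orthogonal projection onto the diagonal. -/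
noncomputable def diagonalReflection (x : PiLp 2 (fun _ : ι => E)) : PiLp 2 (fun _ : ι => E) :=
  WithLp.toLp 2 fun i => (2 / Fintype.card ι : ℝ) • ∑ j, x j - x i

lemma norm_diagonalReflection (x : PiLp 2 (fun _ : ι => E)) :
    ‖diagonalReflection x‖ = ‖x‖ := by
  rw [← sq_eq_sq₀ (norm_nonneg _) (norm_nonneg _), PiLp.norm_sq_eq_of_L2,
    PiLp.norm_sq_eq_of_L2]
  rcases isEmpty_or_nonempty ι with hι | hι
  · simp
  have hcard : (Fintype.card ι : ℝ) ≠ 0 := by positivity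
  simp only [diagonalReflection, PiLp.toLp_apply, sum_norm_sq_sub_const, real_inner_smul_left,
    real_inner_self_eq_norm_sq, norm_smul, Real.norm_eq_abs, mul_pow, sq_abs]
  field_simp
  ring

end

/-- For `m ≥ 3` and equal weights `λ i = 1/m`, setting
`α = m/(2m−2)` and `N = α⁻¹ (R − (1−α) Id)`, the map `N` is an isometry of `X^m`
(with the Hilbert product norm); consequently `R = (1−α)Id + αN` is `α`-averaged
with `α ∈ (0,1)`. -/
theorem R_averaged_of_equal_weights
    {X : Type*} [NormedAddCommGroup X] [InnerProductSpace ℝ X]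
    (m : ℕ) (hm : 3 ≤ m)
    (R : PiLp 2 (fun _ : Fin m => X) → PiLp 2 (fun _ : Fin m => X))
    (hR : ∀ x i, R x i = ((m : ℝ) - 1)⁻¹ • ∑ j ∈ Finset.univ.erase i, x j)
    (α : ℝ) (hα : α = m / (2 * m - 2))
    (N : PiLp 2 (fun _ : Fin m => X) → PiLp 2 (fun _ : Fin m => X))
    (hN : ∀ x, N x = α⁻¹ • (R x - (1 - α) • x)) :
    (∀ x, ‖N x‖ = ‖x‖) ∧ 0 < α ∧ α < 1 ∧
      (∀ x, R x = (1 - α) • x + α • N x) := by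
  have hm3 : (3 : ℝ) ≤ m := by exact_mod_cast hm
  have hα_pos : 0 < α := by rw [hα]; exact div_pos (by linarith) (by linarith)
  have hα_lt_one : α < 1 := by rw [hα, div_lt_one (by linarith)]; linarith
  have hN_eq : ∀ x, N x = diagonalReflection x := by
    intro x
    ext i
    have hm0 : (m : ℝ) ≠ 0 := by positivity
    have hm1 : (m : ℝ) - 1 ≠ 0 := by linarith
    have h2m2 : 2 * (m : ℝ) - 2 ≠ 0 := by linarith
    rw [hN, PiLp.smul_apply, PiLp.sub_apply, PiLp.smul_apply, hR,
      sum_erase_eq_sub (mem_univ i), diagonalReflection, PiLp.toLp_apply, Fintype.card_fin, hα]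
    match_scalars
    · field_simp
    · field_simp; ring
  refine ⟨fun x => (hN_eq x).symm ▸ norm_diagonalReflection x, hα_pos, hα_lt_one, fun x => ?_⟩
  rw [hN, smul_smul, mul_inv_cancel₀ hα_pos.ne', one_smul]
  abel
end

section
/- Suppose m ≥ 3 and λ_i = 1/m for every i ∈ I, and let Q_1,…,Q_m : X → X be firmly nonexpansive. Then the composition J∘R is (2m/(3m−2))-averaged: there exists a nonexpansive map N : 𝐗 → 𝐗 such that J∘R = (1−α)Id + αN with α = 2m/(3m−2). -/
/-!
`J` is firmly nonexpansive, being a product of firmly nonexpansive maps, and the linear map `R`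
satisfies the exact identity `m‖Ru‖² + (m - 2)‖u - Ru‖² = m‖u‖²`. Splitting
`u - JRu` through `Ru` and using `‖a + b‖² ≤ 2‖a‖² + 2‖b‖²`, these combine to
`‖JRx - JRy‖² + (m - 2)/(2m) ‖(x - y) - (JRx - JRy)‖² ≤ ‖x - y‖²`.
Since `(m - 2)/(2m) = (1 - α)/α`, this is the standard characterization of `α`-averaged maps:
`N = (1 - α⁻¹) Id + α⁻¹ JR` is then nonexpansive.
-/

open Finset RealInnerProductSpace

def FirmlyNonexpansive {E : Type*} [SeminormedAddCommGroup E] (T : E → E) : Prop :=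
  ∀ x y, ‖T x - T y‖ ^ 2 + ‖(x - T x) - (y - T y)‖ ^ 2 ≤ ‖x - y‖ ^ 2

theorem FirmlyNonexpansive.piLp {ι : Type*} [Fintype ι] {β : ι → Type*}
    [∀ i, SeminormedAddCommGroup (β i)] {Q : ∀ i, β i → β i}
    (hQ : ∀ i, FirmlyNonexpansive (Q i)) {T : PiLp 2 β → PiLp 2 β}
    (hT : ∀ x i, T x i = Q i (x i)) : FirmlyNonexpansive T := by
  intro x y
  simp only [PiLp.norm_sq_eq_of_L2, ← sum_add_distrib, PiLp.sub_apply, hT]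
  exact sum_le_sum fun i _ => hQ i (x i) (y i)

theorem norm_sq_add_div_mul_norm_sub_sq_le {E : Type*} [SeminormedAddCommGroup E]
    {u w v : E} {m : ℝ} (hm : 2 ≤ m) (hv : ‖v‖ ^ 2 + ‖w - v‖ ^ 2 ≤ ‖w‖ ^ 2)
    (hw : m * ‖w‖ ^ 2 + (m - 2) * ‖u - w‖ ^ 2 = m * ‖u‖ ^ 2) :
    ‖v‖ ^ 2 + (m - 2) / (2 * m) * ‖u - v‖ ^ 2 ≤ ‖u‖ ^ 2 := by
  have htri : ‖u - v‖ ^ 2 ≤ 2 * (‖u - w‖ ^ 2 + ‖w - v‖ ^ 2) :=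
    (pow_le_pow_left₀ (norm_nonneg _) (norm_sub_le_norm_sub_add_norm_sub u w v) 2).trans add_sq_le
  have hm0 : 0 < 2 * m := by linarith
  rw [div_mul_eq_mul_div, add_div' _ _ _ hm0.ne', div_le_iff₀ hm0]
  nlinarith [mul_le_mul_of_nonneg_left htri (by linarith : 0 ≤ m - 2),
    mul_le_mul_of_nonneg_left hv hm0.le]

section InnerProductSpace

variable {E : Type*} [NormedAddCommGroup E] [InnerProductSpace ℝ E]

theorem norm_one_sub_smul_add_smul_sq (u v : E) (c : ℝ) :
    ‖(1 - c) • u + c • v‖ ^ 2 = (1 - c) * ‖u‖ ^ 2 + c * ‖v‖ ^ 2 - c * (1 - c) * ‖u - v‖ ^ 2 := by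
  rw [norm_add_sq_real, norm_sub_sq_real, norm_smul, norm_smul, real_inner_smul_left,
    real_inner_smul_right, mul_pow, mul_pow, Real.norm_eq_abs, Real.norm_eq_abs, sq_abs, sq_abs]
  ring

theorem exists_nonexpansive_eq_averaged {T : E → E} {α : ℝ} (hα : 0 < α)
    (hT : ∀ x y, ‖T x - T y‖ ^ 2 + (α⁻¹ - 1) * ‖(x - y) - (T x - T y)‖ ^ 2 ≤ ‖x - y‖ ^ 2) :
    ∃ N : E → E, (∀ x y, ‖N x - N y‖ ≤ ‖x - y‖) ∧ ∀ x, T x = (1 - α) • x + α • N x := by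
  refine ⟨fun x => (1 - α⁻¹) • x + α⁻¹ • T x, fun x y => ?_, fun x => ?_⟩
  · have hdiff : ((1 - α⁻¹) • x + α⁻¹ • T x) - ((1 - α⁻¹) • y + α⁻¹ • T y)
        = (1 - α⁻¹) • (x - y) + α⁻¹ • (T x - T y) := by
      simp only [smul_sub]; abel
    have hscaled := mul_le_mul_of_nonneg_left (hT x y) (inv_pos.mpr hα).le
    refine le_of_pow_le_pow_left₀ two_ne_zero (norm_nonneg _) ?_
    rw [hdiff, norm_one_sub_smul_add_smul_sq]
    linarith
  · rw [smul_add, smul_smul, smul_smul, mul_sub, mul_one, mul_inv_cancel₀ hα.ne', one_smul]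
    module

theorem sum_norm_smul_sub_sum_sq {ι : Type*} [Fintype ι] (u : ι → E) (a : ℝ) :
    ∑ i, ‖a • u i - ∑ j, u j‖ ^ 2
      = a ^ 2 * ∑ i, ‖u i‖ ^ 2 - (2 * a - Fintype.card ι) * ‖∑ j, u j‖ ^ 2 := by
  simp only [norm_sub_sq_real, sum_add_distrib, sum_sub_distrib, norm_smul, mul_pow,
    real_inner_smul_left, ← mul_sum, ← sum_inner, real_inner_self_eq_norm_sq, sum_const,
    card_univ, nsmul_eq_mul, Real.norm_eq_abs, sq_abs]
  ring

theorem mul_norm_sq_add_mul_norm_sub_sq_eq {ι : Type*} [Fintype ι] [DecidableEq ι]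
    (hι : 1 < Fintype.card ι) {R : PiLp 2 (fun _ : ι => E) → PiLp 2 (fun _ : ι => E)}
    (hR : ∀ x i, R x i = ((Fintype.card ι : ℝ) - 1)⁻¹ • ∑ j ∈ univ.erase i, x j)
    (x y : PiLp 2 (fun _ : ι => E)) :
    (Fintype.card ι : ℝ) * ‖R x - R y‖ ^ 2
        + ((Fintype.card ι : ℝ) - 2) * ‖(x - y) - (R x - R y)‖ ^ 2
      = Fintype.card ι * ‖x - y‖ ^ 2 := by
  set n : ℝ := (Fintype.card ι : ℝ)
  set u := x - y
  set s := ∑ j, u j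
  have hn1 : n - 1 ≠ 0 := sub_ne_zero.mpr (Nat.one_lt_cast.mpr hι).ne'
  have hw : ∀ i, (n - 1) • (R x - R y) i = s - u i := by
    intro i
    rw [PiLp.sub_apply, hR, hR, ← smul_sub, smul_smul, mul_inv_cancel₀ hn1, one_smul,
      ← sum_sub_distrib, sum_erase_eq_sub (mem_univ i)]
    rfl
  have hRsq : (n - 1) ^ 2 * ‖R x - R y‖ ^ 2 = ∑ i, ‖(1 : ℝ) • u i - s‖ ^ 2 := by
    rw [PiLp.norm_sq_eq_of_L2, mul_sum]
    refine sum_congr rfl fun i _ => ?_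
    rw [one_smul, norm_sub_rev, ← hw, norm_smul, mul_pow, Real.norm_eq_abs, sq_abs]
  have hIRsq : (n - 1) ^ 2 * ‖u - (R x - R y)‖ ^ 2 = ∑ i, ‖n • u i - s‖ ^ 2 := by
    rw [PiLp.norm_sq_eq_of_L2, mul_sum]
    refine sum_congr rfl fun i _ => ?_
    have : (n - 1) • (u - (R x - R y)) i = n • u i - s := by
      rw [PiLp.sub_apply, smul_sub, hw]
      module
    rw [← this, norm_smul, mul_pow, Real.norm_eq_abs, sq_abs]
  rw [sum_norm_smul_sub_sum_sq] at hRsq hIRsq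
  have hu : ‖u‖ ^ 2 = ∑ i, ‖u i‖ ^ 2 := PiLp.norm_sq_eq_of_L2 _ u
  refine mul_left_cancel₀ (pow_ne_zero 2 hn1) ?_
  linear_combination n * hRsq + (n - 2) * hIRsq - n * (n - 1) ^ 2 * hu

end InnerProductSpace

/-- For `m ≥ 3`, equal weights `λ i = 1/m`, and firmly nonexpansive
`Q₁, …, Q_m`, the composition `J ∘ R` is `(2m/(3m−2))`-averaged: there is a
nonexpansive `N` on `X^m` with `J ∘ R = (1−α)Id + αN`, `α = 2m/(3m−2)`. -/
theorem JR_averaged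
    {X : Type*} [NormedAddCommGroup X] [InnerProductSpace ℝ X]
    (m : ℕ) (hm : 3 ≤ m)
    (Q : Fin m → X → X)
    (hQ : ∀ i x y, ‖Q i x - Q i y‖ ^ 2 + ‖(x - Q i x) - (y - Q i y)‖ ^ 2 ≤ ‖x - y‖ ^ 2)
    (R J : PiLp 2 (fun _ : Fin m => X) → PiLp 2 (fun _ : Fin m => X))
    (hR : ∀ x i, R x i = ((m : ℝ) - 1)⁻¹ • ∑ j ∈ Finset.univ.erase i, x j)
    (hJ : ∀ x i, J x i = Q i (x i))
    (α : ℝ) (hα : α = 2 * m / (3 * m - 2)) :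
    ∃ N : PiLp 2 (fun _ : Fin m => X) → PiLp 2 (fun _ : Fin m => X),
      (∀ x y, ‖N x - N y‖ ≤ ‖x - y‖) ∧ (∀ x, J (R x) = (1 - α) • x + α • N x) := by
  have hm2 : (2 : ℝ) ≤ m := by exact_mod_cast (by omega : 2 ≤ m)
  have hα0 : 0 < α := by rw [hα]; apply div_pos <;> linarith
  have hκ : α⁻¹ - 1 = ((m : ℝ) - 2) / (2 * m) := by rw [hα, inv_div]; field_simp; ring
  refine exists_nonexpansive_eq_averaged hα0 fun x y => ?_
  have hRx := mul_norm_sq_add_mul_norm_sub_sq_eq (by rw [Fintype.card_fin]; omega)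
    (by simpa using hR) x y
  have hJx := FirmlyNonexpansive.piLp hQ hJ (R x) (R y)
  rw [sub_sub_sub_comm] at hJx
  rw [hκ]
  exact norm_sq_add_div_mul_norm_sub_sq_le hm2 hJx (by simpa using hRx)
end

section
/- Let T_1,…,T_m and Q_1,…,Q_m be firmly nonexpansive maps on X such that for every i ∈ I and all z, y ∈ X, y = Q_i(z) if and only if y = T_i(μ_i z + λ_i y) (this holds when T_i = J_{A_i} and Q_i = J_{μ_i^{-1}A_i} for a maximally monotone operator A_i). Then Fix(J∘R) = S, i.e. x = (x_i)_{i∈I} satisfies (J∘R)x = x if and only if x_i = T_i(Σ_{j∈I} λ_j x_j) for every i ∈ I. -/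
/-! Since `μᵢ (R x)ᵢ + λᵢ xᵢ = ∑ⱼ λⱼ xⱼ`, the compatibility relation between `Qᵢ` and `Tᵢ`,
applied with `z = (R x)ᵢ` and `y = xᵢ`, turns `xᵢ = Qᵢ (R x)ᵢ` into `xᵢ = Tᵢ (∑ⱼ λⱼ xⱼ)`. -/

theorem Finset.smul_sum_erase_div_smul_add_smul {𝕜 ι E : Type*} [Field 𝕜]
    [AddCommGroup E] [Module 𝕜 E] [DecidableEq ι] {s : Finset ι} {i : ι} (hi : i ∈ s)
    (lam : ι → 𝕜) (x : ι → E) {c : 𝕜} (hc : c ≠ 0) :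
    c • ∑ j ∈ s.erase i, (lam j / c) • x j + lam i • x i = ∑ j ∈ s, lam j • x j := by
  rw [Finset.smul_sum]
  simp_rw [smul_smul, mul_div_cancel₀ _ hc]
  exact Finset.sum_erase_add s (fun j => lam j • x j) hi

theorem fix_JR_eq_S_general
    {X : Type*} [NormedAddCommGroup X] [InnerProductSpace ℝ X]
    (m : ℕ)
    (lam : Fin m → ℝ) (hlam : ∀ i, lam i ∈ Set.Ioo (0 : ℝ) 1)
    (mu : Fin m → ℝ) (hmu : ∀ i, mu i = 1 - lam i)
    (T Q : Fin m → X → X)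
    (hTQ : ∀ (i : Fin m) (z y : X), y = Q i z ↔ y = T i (mu i • z + lam i • y))
    (x : Fin m → X) :
    (∀ i, Q i (∑ j ∈ Finset.univ.erase i, (lam j / mu i) • x j) = x i)
      ↔ ∀ i, x i = T i (∑ j, lam j • x j) := by
  have hmu_ne : ∀ i, mu i ≠ 0 := fun i => by rw [hmu i]; linarith [(hlam i).2]
  refine forall_congr' fun i => ?_
  rw [eq_comm, hTQ,
    Finset.smul_sum_erase_div_smul_add_smul (Finset.mem_univ i) lam x (hmu_ne i)]

/-- If `T i` and `Q i` are firmly nonexpansive and satisfy the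
compatibility relation `y = Q i z ↔ y = T i (μ i • z + λ i • y)`, then
`Fix (J ∘ R) = S`: `x` satisfies `(J ∘ R) x = x` iff `x i = T i (∑ j, λ j • x j)`
for every `i`. -/
theorem fix_JR_eq_S
    {X : Type*} [NormedAddCommGroup X] [InnerProductSpace ℝ X]
    (m : ℕ) (hm : 2 ≤ m)
    (lam : Fin m → ℝ) (hlam : ∀ i, lam i ∈ Set.Ioo (0 : ℝ) 1)
    (hsum : ∑ i, lam i = 1)
    (mu : Fin m → ℝ) (hmu : ∀ i, mu i = 1 - lam i)
    (T Q : Fin m → X → X)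
    (hT : ∀ i x y, ‖T i x - T i y‖ ^ 2 + ‖(x - T i x) - (y - T i y)‖ ^ 2 ≤ ‖x - y‖ ^ 2)
    (hQ : ∀ i x y, ‖Q i x - Q i y‖ ^ 2 + ‖(x - Q i x) - (y - Q i y)‖ ^ 2 ≤ ‖x - y‖ ^ 2)
    (hTQ : ∀ (i : Fin m) (z y : X), y = Q i z ↔ y = T i (mu i • z + lam i • y))
    (x : Fin m → X) :
    (∀ i, Q i (∑ j ∈ Finset.univ.erase i, (lam j / mu i) • x j) = x i)
      ↔ ∀ i, x i = T i (∑ j, lam j • x j) :=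
  fix_JR_eq_S_general m lam hlam mu hmu T Q hTQ x
end

section
/- Suppose m ≥ 3 and λ_i = 1/m for every i ∈ I, let Q_1,…,Q_m : X → X be firmly nonexpansive, let x_0 ∈ 𝐗, and define x_{n+1} = (J∘R)x_n for all n. If J∘R has no fixed point in 𝐗, then ‖x_n‖ → +∞. -/
/-!
`T = J ∘ R` satisfies `‖T a - T b‖² + β ‖(a - T a) - (b - T b)‖² ≤ ‖a - b‖²` with
`β = (m - 2) / (2m) > 0`: `J` is firmly nonexpansive, and `R` satisfies this with equality for
`β = (m - 2) / m`. For such a `T` the displacements `uₙ = xₙ - xₙ₊₁` have nonincreasing norms,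
with limit `d` say, and `uₙ - uₙ₊ₖ → 0` for every `k`; hence `‖xₙ - xₙ₊ₖ‖ ≥ k d`. If `d > 0` the
orbit escapes linearly. If `d = 0` and a subsequence of the orbit stays bounded, its weak limit
along an ultrafilter is a fixed point of `T` by the demiclosedness principle.
-/

open Filter Topology Finset Function
open scoped InnerProductSpace

/-- `IsAveraged β T` is `α`-averagedness of `T` for `β = (1 - α) / α`; firm nonexpansiveness is
the case `β = 1`. -/
def IsAveraged {E : Type*} [SeminormedAddCommGroup E] (β : ℝ) (T : E → E) : Prop :=
  ∀ a b, ‖T a - T b‖ ^ 2 + β * ‖(a - T a) - (b - T b)‖ ^ 2 ≤ ‖a - b‖ ^ 2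

section Seminormed

variable {E : Type*} [SeminormedAddCommGroup E] {β β' : ℝ} {T T₁ T₂ : E → E} {x : ℕ → E}

theorem antitone_norm_sub_add_of_nonexpansive (hT : ∀ a b, ‖T a - T b‖ ≤ ‖a - b‖)
    (hx : ∀ n, x (n + 1) = T (x n)) (k : ℕ) : Antitone fun n => ‖x n - x (n + k)‖ :=
  antitone_nat_of_succ_le fun n => by
    simpa only [add_right_comm n 1 k, hx] using hT (x n) (x (n + k))

theorem tendsto_norm_sub_add_of_nonexpansive (hT : ∀ a b, ‖T a - T b‖ ≤ ‖a - b‖)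
    (hx : ∀ n, x (n + 1) = T (x n)) (k : ℕ) :
    Tendsto (fun n => ‖x n - x (n + k)‖) atTop (𝓝 (⨅ n, ‖x n - x (n + k)‖)) :=
  tendsto_atTop_ciInf (antitone_norm_sub_add_of_nonexpansive hT hx k)
    ⟨0, Set.forall_mem_range.2 fun _ => norm_nonneg _⟩

namespace IsAveraged

theorem mono (hT : IsAveraged β T) (h : β' ≤ β) : IsAveraged β' T := fun a b =>
  le_trans (by gcongr) (hT a b)

theorem norm_apply_sub_apply_le (hT : IsAveraged β T) (hβ : 0 ≤ β) (a b : E) :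
    ‖T a - T b‖ ≤ ‖a - b‖ := by
  have h := hT a b
  have : 0 ≤ β * ‖(a - T a) - (b - T b)‖ ^ 2 := by positivity
  exact (pow_le_pow_iff_left₀ (norm_nonneg _) (norm_nonneg _) two_ne_zero).1 (by linarith)

theorem comp (h₁ : IsAveraged β T₁) (h₂ : IsAveraged β T₂) (hβ : 0 ≤ β) :
    IsAveraged (β / 2) (T₂ ∘ T₁) := by
  intro a b
  have hpq : (a - T₂ (T₁ a)) - (b - T₂ (T₁ b))
      = ((a - T₁ a) - (b - T₁ b)) + ((T₁ a - T₂ (T₁ a)) - (T₁ b - T₂ (T₁ b))) := by abel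
  set p := (a - T₁ a) - (b - T₁ b)
  set q := (T₁ a - T₂ (T₁ a)) - (T₁ b - T₂ (T₁ b))
  have hsq : ‖p + q‖ ^ 2 ≤ 2 * ‖p‖ ^ 2 + 2 * ‖q‖ ^ 2 := by
    nlinarith [norm_add_le p q, norm_nonneg (p + q), sq_nonneg (‖p‖ - ‖q‖)]
  have h₁ab := h₁ a b
  have h₂ab := h₂ (T₁ a) (T₁ b)
  simp only [Function.comp_apply, hpq]
  nlinarith [mul_le_mul_of_nonneg_left hsq hβ]

theorem piLp {ι : Type*} [Fintype ι] {F : ι → Type*} [∀ i, SeminormedAddCommGroup (F i)]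
    {Q : ∀ i, F i → F i} (hQ : ∀ i, IsAveraged β (Q i)) {J : PiLp 2 F → PiLp 2 F}
    (hJ : ∀ x i, J x i = Q i (x i)) : IsAveraged β J := by
  intro a b
  simp only [PiLp.norm_sq_eq_of_L2, PiLp.sub_apply, hJ, mul_sum, ← sum_add_distrib]
  exact sum_le_sum fun i _ => hQ i (a i) (b i)

theorem tendsto_norm_sub_sub_orbit (hT : IsAveraged β T) (hβ : 0 < β)
    (hx : ∀ n, x (n + 1) = T (x n)) (k : ℕ) :
    Tendsto (fun n => ‖(x n - x (n + 1)) - (x (n + k) - x (n + k + 1))‖) atTop (𝓝 0) := by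
  set g := fun n => ‖x n - x (n + k)‖
  have hg := tendsto_norm_sub_add_of_nonexpansive (hT.norm_apply_sub_apply_le hβ.le) hx k
  have hstep : ∀ n, ‖(x n - x (n + 1)) - (x (n + k) - x (n + k + 1))‖ ^ 2
      ≤ (g n ^ 2 - g (n + 1) ^ 2) / β := fun n => by
    rw [le_div_iff₀ hβ]
    have h := hT (x n) (x (n + k))
    simp only [← hx] at h
    simp only [g, add_right_comm n 1 k]
    linarith
  have hsq : Tendsto (fun n => ‖(x n - x (n + 1)) - (x (n + k) - x (n + k + 1))‖ ^ 2)
      atTop (𝓝 0) := by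
    refine squeeze_zero (fun n => sq_nonneg _) hstep ?_
    simpa using (((hg.pow 2).sub ((hg.comp (tendsto_add_atTop_nat 1)).pow 2)).div_const β)
  simpa using hsq.sqrt

end IsAveraged

end Seminormed

namespace IsAveraged

variable {E : Type*} [SeminormedAddCommGroup E] [NormedSpace ℝ E] {β : ℝ} {T : E → E}
  {x : ℕ → E}

theorem mul_iInf_le_norm_sub_orbit (hT : IsAveraged β T) (hβ : 0 < β)
    (hx : ∀ n, x (n + 1) = T (x n)) (n k : ℕ) :
    k * (⨅ i, ‖x i - x (i + 1)‖) ≤ ‖x n - x (n + k)‖ := by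
  set u := fun i => x i - x (i + 1)
  have hnonexp := hT.norm_apply_sub_apply_le hβ.le
  have hlow : ∀ N, k * ‖u N‖ - ∑ j ∈ range k, ‖u N - u (N + j)‖ ≤ ‖x N - x (N + k)‖ := by
    intro N
    have htel : (k : ℝ) • u N - (x N - x (N + k)) = ∑ j ∈ range k, (u N - u (N + j)) := by
      have hsum : x N - x (N + k) = ∑ j ∈ range k, u (N + j) :=
        (sum_range_sub' (fun j => x (N + j)) k).symm
      rw [hsum, sum_sub_distrib (f := fun _ => u N), sum_const, card_range,
        Nat.cast_smul_eq_nsmul]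
    calc k * ‖u N‖ - ∑ j ∈ range k, ‖u N - u (N + j)‖
        ≤ ‖(k : ℝ) • u N‖ - ‖(k : ℝ) • u N - (x N - x (N + k))‖ := by
          rw [htel, norm_smul, RCLike.norm_natCast]
          gcongr
          exact norm_sum_le _ _
      _ ≤ ‖x N - x (N + k)‖ := (norm_sub_norm_le _ _).trans_eq (by rw [sub_sub_cancel])
  have herr : Tendsto (fun N => k * ‖u N‖ - ∑ j ∈ range k, ‖u N - u (N + j)‖) atTop
      (𝓝 (k * ⨅ i, ‖u i‖)) := by
    have hsum : Tendsto (fun N => ∑ j ∈ range k, ‖u N - u (N + j)‖) atTop (𝓝 0) := by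
      simpa using tendsto_finsetSum (range k) fun j _ => hT.tendsto_norm_sub_sub_orbit hβ hx j
    simpa using ((tendsto_norm_sub_add_of_nonexpansive hnonexp hx 1).const_mul (k : ℝ)).sub hsum
  exact le_of_tendsto herr (eventually_atTop.2 ⟨n, fun N hN =>
    (hlow N).trans (antitone_norm_sub_add_of_nonexpansive hnonexp hx k hN)⟩)

theorem tendsto_norm_atTop_of_iInf_pos (hT : IsAveraged β T) (hβ : 0 < β)
    (hx : ∀ n, x (n + 1) = T (x n)) (hd : 0 < ⨅ i, ‖x i - x (i + 1)‖) :
    Tendsto (fun n => ‖x n‖) atTop atTop := by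
  refine tendsto_atTop_mono (fun n => ?_) (tendsto_atTop_add_const_right _ (-‖x 0‖)
    (tendsto_natCast_atTop_atTop.atTop_mul_const hd))
  have h := hT.mul_iInf_le_norm_sub_orbit hβ hx 0 n
  rw [zero_add] at h
  linarith [norm_sub_le (x 0) (x n)]

end IsAveraged

section InnerProduct

variable {E : Type*} [NormedAddCommGroup E] [InnerProductSpace ℝ E]

theorem norm_sq_add_mul_norm_sub_sq_of_eq_smul_sum_erase {ι : Type*} [Fintype ι] [DecidableEq ι]
    (hι : 2 ≤ Fintype.card ι) {z w : PiLp 2 (fun _ : ι => E)}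
    (hw : ∀ i, w i = ((Fintype.card ι : ℝ) - 1)⁻¹ • ∑ j ∈ univ.erase i, z j) :
    ‖w‖ ^ 2 + ((Fintype.card ι - 2) / Fintype.card ι) * ‖z - w‖ ^ 2 = ‖z‖ ^ 2 := by
  have hn : (2 : ℝ) ≤ Fintype.card ι := by exact_mod_cast hι
  set n : ℝ := (Fintype.card ι : ℝ)
  set c := (n - 1)⁻¹ with hc
  set s := ∑ j, z j
  have hw' : ∀ i, w i = c • (s - z i) := fun i => by
    rw [hw, sum_erase_eq_sub (mem_univ i)]
  have hz : ∑ i, ‖z i‖ ^ 2 = ‖z‖ ^ 2 := (PiLp.norm_sq_eq_of_L2 _ z).symm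
  have hsz : ∑ i, ⟪s, z i⟫_ℝ = ‖s‖ ^ 2 := by rw [← inner_sum, real_inner_self_eq_norm_sq]
  have hnorm : ‖w‖ ^ 2 = c ^ 2 * ((n - 2) * ‖s‖ ^ 2 + ‖z‖ ^ 2) := by
    rw [PiLp.norm_sq_eq_of_L2]
    simp only [hw', norm_smul, mul_pow, Real.norm_eq_abs, sq_abs,
      norm_sub_sq_real, sum_add_distrib, sum_sub_distrib, ← mul_sum, hz, hsz, sum_const,
      card_univ, nsmul_eq_mul]
    ring
  have hinner : ⟪z, w⟫_ℝ = c * (‖s‖ ^ 2 - ‖z‖ ^ 2) := by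
    simp only [PiLp.inner_apply, hw', real_inner_smul_right, inner_sub_right, ← mul_sum,
      sum_sub_distrib, real_inner_self_eq_norm_sq, hz, real_inner_comm s, hsz]
  have hn1 : n - 1 ≠ 0 := by linarith
  rw [norm_sub_sq_real, hnorm, hinner, hc]
  field_simp
  ring

theorem isAveraged_of_apply_eq_smul_sum_erase {ι : Type*} [Fintype ι] [DecidableEq ι]
    (hι : 2 ≤ Fintype.card ι) {R : PiLp 2 (fun _ : ι => E) → PiLp 2 (fun _ : ι => E)}
    (hR : ∀ x i, R x i = ((Fintype.card ι : ℝ) - 1)⁻¹ • ∑ j ∈ univ.erase i, x j) :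
    IsAveraged ((Fintype.card ι - 2) / Fintype.card ι) R := fun a b => by
  have hab : (a - R a) - (b - R b) = (a - b) - (R a - R b) := by abel
  rw [hab, norm_sq_add_mul_norm_sub_sq_of_eq_smul_sum_erase hι fun i => ?_]
  simp only [PiLp.sub_apply, hR, ← smul_sub, ← sum_sub_distrib]
theorem exists_tendsto_inner_of_eventually_norm_le [CompleteSpace E] {ι : Type*}
    (U : Ultrafilter ι) {f : ι → E} {M : ℝ} (hf : ∀ᶠ i in U, ‖f i‖ ≤ M) :
    ∃ w : E, ∀ y, Tendsto (fun i => ⟪f i, y⟫_ℝ) U (𝓝 ⟪w, y⟫_ℝ) := by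
  have hbound : ∀ y, ∀ᶠ i in U, ‖⟪f i, y⟫_ℝ‖ ≤ M * ‖y‖ := fun y => hf.mono fun i hi =>
    (norm_inner_le_norm _ _).trans (mul_le_mul_of_nonneg_right hi (norm_nonneg y))
  have hlim : ∀ y, ∃ a, Tendsto (fun i => ⟪f i, y⟫_ℝ) U (𝓝 a) := fun y => by
    obtain ⟨a, -, ha⟩ := (isCompact_closedBall (0 : ℝ) (M * ‖y‖)).ultrafilter_le_nhds
      (U.map fun i => ⟪f i, y⟫_ℝ)
      (le_principal_iff.2 <| (hbound y).mono fun i hi => mem_closedBall_zero_iff.2 hi)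
    exact ⟨a, ha⟩
  choose L hL using hlim
  let ℓ : E →ₗ[ℝ] ℝ :=
    { toFun := L
      map_add' := fun y z => tendsto_nhds_unique (hL (y + z))
        (by simpa only [inner_add_right] using (hL y).add (hL z))
      map_smul' := fun r y => tendsto_nhds_unique (hL (r • y))
        (by simpa only [real_inner_smul_right, RingHom.id_apply, smul_eq_mul] using
          (hL y).const_mul r) }
  refine ⟨(InnerProductSpace.toDual ℝ E).symm
    (ℓ.mkContinuous M fun y => le_of_tendsto (hL y).norm (hbound y)), fun y => ?_⟩
  rw [InnerProductSpace.toDual_symm_apply]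
  exact hL y

theorem isFixedPt_of_tendsto_inner {ι : Type*} {l : Filter ι} [l.NeBot] {T : E → E}
    (hT : ∀ a b, ‖T a - T b‖ ≤ ‖a - b‖) {f : ι → E} {w : E} {M : ℝ}
    (hf : ∀ᶠ i in l, ‖f i‖ ≤ M) (hres : Tendsto (fun i => f i - T (f i)) l (𝓝 0))
    (hweak : ∀ y, Tendsto (fun i => ⟪f i, y⟫_ℝ) l (𝓝 ⟪w, y⟫_ℝ)) : IsFixedPt T w := by
  set v := w - T w
  set e := fun i => ‖f i - T (f i)‖
  have he : Tendsto e l (𝓝 0) := by simpa using hres.norm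
  -- Expand `‖f i - T w‖ ≤ e i + ‖f i - w‖` around `w`; the cross term vanishes weakly.
  have hbound : ∀ᶠ i in l,
      ‖v‖ ^ 2 ≤ e i ^ 2 + 2 * (M + ‖w‖) * e i - 2 * (⟪f i, v⟫_ℝ - ⟪w, v⟫_ℝ) :=
    hf.mono fun i hi => by
      have h₁ : ‖f i - T w‖ ≤ e i + ‖f i - w‖ := calc
        ‖f i - T w‖ = ‖(f i - T (f i)) + (T (f i) - T w)‖ := by congr 1; abel
        _ ≤ e i + ‖f i - w‖ := (norm_add_le _ _).trans (add_le_add le_rfl (hT _ _))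
      have h₂ : ‖f i - T w‖ ^ 2 = ‖f i - w‖ ^ 2 + 2 * ⟪f i - w, v⟫_ℝ + ‖v‖ ^ 2 := by
        rw [← norm_add_sq_real, sub_add_sub_cancel]
      have h₃ : ‖f i - w‖ ≤ M + ‖w‖ := (norm_sub_le _ _).trans (by linarith)
      rw [inner_sub_left] at h₂
      nlinarith [norm_nonneg (f i - w), norm_nonneg (f i - T (f i)),
        pow_le_pow_left₀ (norm_nonneg _) h₁ 2]
  have hlim : Tendsto (fun i => e i ^ 2 + 2 * (M + ‖w‖) * e i - 2 * (⟪f i, v⟫_ℝ - ⟪w, v⟫_ℝ))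
      l (𝓝 0) := by
    simpa using ((he.pow 2).add (he.const_mul (2 * (M + ‖w‖)))).sub
      (((hweak v).sub_const ⟪w, v⟫_ℝ).const_mul 2)
  have hv : ‖v‖ ^ 2 ≤ 0 := ge_of_tendsto hlim hbound
  exact (sub_eq_zero.1 (norm_eq_zero.1 (by nlinarith [norm_nonneg v]))).symm

theorem IsAveraged.tendsto_norm_orbit_atTop [CompleteSpace E] {β : ℝ} {T : E → E}
    {x : ℕ → E} (hT : IsAveraged β T) (hβ : 0 < β) (hx : ∀ n, x (n + 1) = T (x n))
    (hfix : ¬∃ p, T p = p) : Tendsto (fun n => ‖x n‖) atTop atTop := by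
  have hnonexp := hT.norm_apply_sub_apply_le hβ.le
  obtain hd | hd := (le_ciInf fun n => norm_nonneg (x n - x (n + 1))).lt_or_eq
  · exact hT.tendsto_norm_atTop_of_iInf_pos hβ hx hd
  have hreg : Tendsto (fun n => x n - T (x n)) atTop (𝓝 0) := by
    have h := tendsto_norm_sub_add_of_nonexpansive hnonexp hx 1
    rw [← hd] at h
    rw [tendsto_zero_iff_norm_tendsto_zero]
    exact h.congr fun n => by rw [hx]
  by_contra hnot
  rw [tendsto_atTop] at hnot
  push Not at hnot
  obtain ⟨M, hM⟩ := hnot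
  have : (atTop ⊓ 𝓟 {n | ‖x n‖ < M}).NeBot := frequently_iff_neBot.1 hM
  obtain ⟨U, hU⟩ := exists_ultrafilter_le (atTop ⊓ 𝓟 {n | ‖x n‖ < M})
  have hlt : ∀ᶠ n in (U : Filter ℕ), ‖x n‖ < M := hU.trans inf_le_right (mem_principal_self _)
  have hbdd : ∀ᶠ n in (U : Filter ℕ), ‖x n‖ ≤ M := hlt.mono fun _ h => h.le
  obtain ⟨w, hw⟩ := exists_tendsto_inner_of_eventually_norm_le U hbdd
  exact hfix ⟨w, isFixedPt_of_tendsto_inner hnonexp hbdd (hreg.mono_left (hU.trans inf_le_left))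
    hw⟩

end InnerProduct

/-- For `m ≥ 3` and equal weights `1/m`, if `J ∘ R` has no fixed point,
then the iterates `x_{n+1} = (J ∘ R) x_n` satisfy `‖x_n‖ → +∞`. -/
theorem norm_iterates_tendsto_atTop_of_no_fixed_point
    {X : Type*} [NormedAddCommGroup X] [InnerProductSpace ℝ X] [CompleteSpace X]
    (m : ℕ) (hm : 3 ≤ m)
    (Q : Fin m → X → X)
    (hQ : ∀ i x y, ‖Q i x - Q i y‖ ^ 2 + ‖(x - Q i x) - (y - Q i y)‖ ^ 2 ≤ ‖x - y‖ ^ 2)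
    (R J : PiLp 2 (fun _ : Fin m => X) → PiLp 2 (fun _ : Fin m => X))
    (hR : ∀ x i, R x i = ((m : ℝ) - 1)⁻¹ • ∑ j ∈ Finset.univ.erase i, x j)
    (hJ : ∀ x i, J x i = Q i (x i))
    (x : ℕ → PiLp 2 (fun _ : Fin m => X))
    (hrec : ∀ n, x (n + 1) = J (R (x n)))
    (hfix : ¬ ∃ p, J (R p) = p) :
    Filter.Tendsto (fun n => ‖x n‖) Filter.atTop Filter.atTop := by
  have hm' : (3 : ℝ) ≤ m := by exact_mod_cast hm
  have hR' : IsAveraged ((m - 2) / m) R := by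
    simpa using isAveraged_of_apply_eq_smul_sum_erase
      (by simp only [Fintype.card_fin]; omega : 2 ≤ Fintype.card (Fin m))
      (by simpa using hR)
  have hJ' : IsAveraged 1 J := IsAveraged.piLp (fun i a b => by simpa using hQ i a b) hJ
  have hβ : 0 ≤ ((m : ℝ) - 2) / m := div_nonneg (by linarith) (by linarith)
  have hT := hR'.comp (hJ'.mono (div_le_one_of_le₀ (by linarith) (by linarith))) hβ
  exact hT.tendsto_norm_orbit_atTop (div_pos (div_pos (by linarith) (by linarith)) two_pos)
    hrec hfix
end

section
/- Suppose X ≠ {0}. Then for every k ∈ I, the operator R_k is not nonexpansive: there exists x ∈ 𝐗 with ‖R_k x‖ > ‖x‖ (indeed, for a unit vector u ∈ X and x with x_i = u for i ≠ k and x_k = 0, one has ‖R_k x‖² = m > m − 1 = ‖x‖²). Moreover, the composition R_m ∘ ⋯ ∘ R_2 ∘ R_1 is not nonexpansive: there exists x ∈ 𝐗 with ‖(R_m ∘ ⋯ ∘ R_1)x‖ > ‖x‖. -/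
/-!
Take a nonzero vector `u` and the constant vector `c = (u, …, u)`. Because the weights
`λ_j / μ_k` (`j ≠ k`) sum to `1`, every `R_k` fixes `c`; and since `R_k` ignores the
`k`-th coordinate of its argument, it also sends `c` with its `k`-th entry replaced by `0`
to `c`, strictly increasing the norm. For the composition, start from `c` with its first
entry zeroed: `R_1` sends it to `c`, which all later `R_k` fix.
-/

open Finset

section WeightedMean

variable {ι X : Type*} [Fintype ι] [DecidableEq ι] [AddCommGroup X] [Module ℝ X]

def replaceByWeightedMean (w : ι → ℝ) (k : ι) (x : WithLp 2 (ι → X)) : WithLp 2 (ι → X) :=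
  WithLp.toLp 2 fun i => if i = k then ∑ j ∈ univ.erase k, w j • x j else x i

theorem replaceByWeightedMean_update (w : ι → ℝ) (k : ι) (x : WithLp 2 (ι → X)) (v : X) :
    replaceByWeightedMean w k (WithLp.toLp 2 (Function.update x.ofLp k v)) =
      replaceByWeightedMean w k x := by
  ext i
  by_cases hi : i = k
  · simp only [replaceByWeightedMean, if_pos hi]
    refine sum_congr rfl fun j hj => ?_
    rw [Function.update_of_ne (ne_of_mem_erase hj)]
  · simp [replaceByWeightedMean, hi]

theorem replaceByWeightedMean_const {w : ι → ℝ} {k : ι} (hw : ∑ j ∈ univ.erase k, w j = 1)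
    (u : X) :
    replaceByWeightedMean w k (WithLp.toLp 2 fun _ => u) = WithLp.toLp 2 fun _ => u := by
  ext i
  by_cases hi : i = k
  · simp [replaceByWeightedMean, hi, ← sum_smul, hw]
  · simp [replaceByWeightedMean, hi]

end WeightedMean

theorem sum_erase_div_one_sub_eq_one {ι : Type*} [Fintype ι] [DecidableEq ι] {lam : ι → ℝ}
    (hsum : ∑ i, lam i = 1) {k : ι} (hk : lam k ≠ 1) :
    ∑ j ∈ univ.erase k, lam j / (1 - lam k) = 1 := by
  have hrest : ∑ j ∈ univ.erase k, lam j = 1 - lam k := by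
    rw [← hsum, ← sum_erase_add univ lam (mem_univ k), add_sub_cancel_right]
  rw [← sum_div, hrest, div_self (sub_ne_zero.mpr hk.symm)]

theorem PiLp.norm_toLp_update_zero_lt {ι : Type*} [Fintype ι] [DecidableEq ι] {β : ι → Type*}
    [∀ i, NormedAddCommGroup (β i)] (x : PiLp 2 β) {k : ι} (hk : x k ≠ 0) :
    ‖WithLp.toLp 2 (Function.update x.ofLp k 0)‖ < ‖x‖ := by
  refine lt_of_pow_lt_pow_left₀ 2 (norm_nonneg x) ?_
  rw [PiLp.norm_sq_eq_of_L2, PiLp.norm_sq_eq_of_L2]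
  refine sum_lt_sum (fun i _ => ?_) ⟨k, mem_univ k, by simp [hk]⟩
  by_cases hi : i = k
  · subst hi; simp
  · simp [hi]

/-- If `X ≠ {0}`, then no `R_k` is nonexpansive, and neither is the
composition `R_m ∘ ⋯ ∘ R_2 ∘ R_1` (the fold applies `R` with index `0` first). -/
theorem Rk_and_composition_not_nonexpansive
    {X : Type*} [NormedAddCommGroup X] [InnerProductSpace ℝ X] [Nontrivial X]
    (m : ℕ) (hm : 2 ≤ m)
    (lam : Fin m → ℝ) (hlam : ∀ i, lam i ∈ Set.Ioo (0 : ℝ) 1)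
    (hsum : ∑ i, lam i = 1)
    (mu : Fin m → ℝ) (hmu : ∀ i, mu i = 1 - lam i)
    (Rk : Fin m → PiLp 2 (fun _ : Fin m => X) → PiLp 2 (fun _ : Fin m => X))
    (hRk : ∀ k x i, Rk k x i =
      if i = k then ∑ j ∈ Finset.univ.erase k, (lam j / mu k) • x j else x i) :
    (∀ k, ∃ x, ‖x‖ < ‖Rk k x‖) ∧
      (∃ x, ‖x‖ < ‖List.foldl (fun y k => Rk k y) x (List.finRange m)‖) := by
  have hRk_eq : ∀ k, Rk k = replaceByWeightedMean (fun j => lam j / mu k) k := fun k => by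
    funext x; ext i; rw [hRk]; rfl
  have hweights : ∀ k, ∑ j ∈ univ.erase k, lam j / mu k = 1 := fun k => by
    simpa only [hmu] using sum_erase_div_one_sub_eq_one hsum (hlam k).2.ne
  obtain ⟨u, hu⟩ := exists_ne (0 : X)
  set c : PiLp 2 (fun _ : Fin m => X) := WithLp.toLp 2 fun _ => u
  have hfix : ∀ k, Rk k c = c := fun k => by
    rw [hRk_eq]; exact replaceByWeightedMean_const (hweights k) u
  have hraise : ∀ k, Rk k (WithLp.toLp 2 (Function.update c.ofLp k 0)) = c := fun k => by
    rw [hRk_eq, replaceByWeightedMean_update, ← hRk_eq, hfix]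
  have hlt : ∀ k, ‖WithLp.toLp 2 (Function.update c.ofLp k 0)‖ < ‖c‖ := fun k =>
    PiLp.norm_toLp_update_zero_lt c hu
  refine ⟨fun k => ⟨_, (hlt k).trans_eq (congrArg norm (hraise k)).symm⟩, ?_⟩
  obtain ⟨n, rfl⟩ : ∃ n, m = n + 1 := ⟨m - 1, by omega⟩
  refine ⟨_, (hlt 0).trans_eq ?_⟩
  rw [List.finRange_succ, List.foldl_cons, hraise, List.foldl_fixed' hfix]
end

section
/- Suppose λ_i = 1/m for every i ∈ I and let Q_1,…,Q_m : X → X be nonexpansive. Then for each k ∈ I, the map J_k ∘ R_k is Lipschitz continuous with constant √(m/(m−1)), and consequently the composition T = (J_m ∘ R_m) ∘ ⋯ ∘ (J_1 ∘ R_1) is Lipschitz continuous with constant (m/(m−1))^{m/2}. -/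
/-! `J_k ∘ R_k` only changes the `k`-th coordinate, to `Q_k` of the mean of the other `m - 1`
coordinates. As `Q_k` is nonexpansive and the squared norm of a mean is at most the mean of the
squared norms (triangle inequality and Cauchy–Schwarz), that coordinate of `J_k R_k x - J_k R_k y`
has squared norm at most `(m - 1)⁻¹ ∑_{j ≠ k} ‖x_j - y_j‖²`. Hence squared distances grow by at
most `1 + (m - 1)⁻¹ = m / (m - 1)`, and Lipschitz constants multiply along the composition. -/

open Finset

theorem norm_inv_card_smul_sum_sq_le {ι E : Type*} [SeminormedAddCommGroup E] [NormedSpace ℝ E]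
    (s : Finset ι) (v : ι → E) :
    ‖(#s : ℝ)⁻¹ • ∑ i ∈ s, v i‖ ^ 2 ≤ (#s : ℝ)⁻¹ * ∑ i ∈ s, ‖v i‖ ^ 2 := by
  have hsum : (∑ i ∈ s, ‖v i‖) ^ 2 ≤ #s * ∑ i ∈ s, ‖v i‖ ^ 2 := sq_sum_le_card_mul_sum_sq
  calc ‖(#s : ℝ)⁻¹ • ∑ i ∈ s, v i‖ ^ 2 ≤ ((#s : ℝ)⁻¹ * ∑ i ∈ s, ‖v i‖) ^ 2 := by
        rw [norm_smul, Real.norm_of_nonneg (by positivity)]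
        gcongr
        exact norm_sum_le _ _
    _ ≤ (#s : ℝ)⁻¹ ^ 2 * (#s * ∑ i ∈ s, ‖v i‖ ^ 2) := by rw [mul_pow]; gcongr
    _ = (#s : ℝ)⁻¹ * ∑ i ∈ s, ‖v i‖ ^ 2 := by
        rcases eq_or_ne (#s : ℝ) 0 with h | h
        · simp [h]
        · field_simp

theorem PiLp.norm_sq_eq_sum_erase_add {ι : Type*} [Fintype ι] [DecidableEq ι] {β : ι → Type*}
    [∀ i, SeminormedAddCommGroup (β i)] (x : PiLp 2 β) (k : ι) :
    ‖x‖ ^ 2 = ∑ i ∈ univ.erase k, ‖x i‖ ^ 2 + ‖x k‖ ^ 2 := by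
  rw [PiLp.norm_sq_eq_of_L2, sum_erase_add _ _ (mem_univ k)]

theorem PiLp.norm_sub_sq_le_of_eq_off {ι : Type*} [Fintype ι] [DecidableEq ι] {β : ι → Type*}
    [∀ i, SeminormedAddCommGroup (β i)] {f : PiLp 2 β → PiLp 2 β} {k : ι} {c : ℝ} (hc : 0 ≤ c)
    (hoff : ∀ x i, i ≠ k → f x i = x i)
    (hk : ∀ x y, ‖f x k - f y k‖ ^ 2 ≤ c * ∑ i ∈ univ.erase k, ‖x i - y i‖ ^ 2) (x y : PiLp 2 β) :
    ‖f x - f y‖ ^ 2 ≤ (1 + c) * ‖x - y‖ ^ 2 := by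
  have hrest : ∑ i ∈ univ.erase k, ‖(f x - f y) i‖ ^ 2 = ∑ i ∈ univ.erase k, ‖x i - y i‖ ^ 2 :=
    sum_congr rfl fun i hi => by
      rw [PiLp.sub_apply, hoff x i (ne_of_mem_erase hi), hoff y i (ne_of_mem_erase hi)]
  rw [PiLp.norm_sq_eq_sum_erase_add _ k, PiLp.norm_sq_eq_sum_erase_add _ k, hrest]
  simp only [PiLp.sub_apply]
  nlinarith [hk x y, sq_nonneg ‖x k - y k‖, mul_nonneg hc (sq_nonneg ‖x k - y k‖)]

theorem LipschitzWith.list_foldl {α ι : Type*} [PseudoEMetricSpace α] {f : ι → α → α} {K : NNReal}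
    (hf : ∀ i, LipschitzWith K (f i)) (L : List ι) :
    LipschitzWith (K ^ L.length) fun x => L.foldl (fun z i => f i z) x := by
  induction L with
  | nil => exact LipschitzWith.id
  | cons a L ih =>
    rw [List.length_cons, pow_succ]
    exact ih.comp (hf a)

theorem norm_sub_le_of_replace_coord_by_average {X : Type*} [SeminormedAddCommGroup X]
    [NormedSpace ℝ X] {m : ℕ} (hm : 2 ≤ m) {Q : X → X} (hQ : ∀ x y, ‖Q x - Q y‖ ≤ ‖x - y‖)
    {k : Fin m} {f : PiLp 2 (fun _ : Fin m => X) → PiLp 2 (fun _ : Fin m => X)}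
    (hf : ∀ x i, f x i = if i = k then Q (((m : ℝ) - 1)⁻¹ • ∑ j ∈ univ.erase k, x j) else x i)
    (x y : PiLp 2 (fun _ : Fin m => X)) :
    ‖f x - f y‖ ≤ √((m : ℝ) / ((m : ℝ) - 1)) * ‖x - y‖ := by
  have hm1 : (0 : ℝ) < m - 1 := by
    have : (2 : ℝ) ≤ m := by exact_mod_cast hm
    linarith
  have hcard : (#(univ.erase k) : ℝ) = m - 1 := by
    rw [card_erase_of_mem (mem_univ k), card_univ, Fintype.card_fin, Nat.cast_pred (by omega)]
  have hsq : ‖f x - f y‖ ^ 2 ≤ (1 + ((m : ℝ) - 1)⁻¹) * ‖x - y‖ ^ 2 := by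
    refine PiLp.norm_sub_sq_le_of_eq_off (by positivity) (fun x i hi => by rw [hf, if_neg hi])
      (fun x y => ?_) x y
    rw [hf, hf, if_pos rfl, if_pos rfl, ← hcard]
    calc _ ≤ ‖(#(univ.erase k) : ℝ)⁻¹ • ∑ j ∈ univ.erase k, x j
            - (#(univ.erase k) : ℝ)⁻¹ • ∑ j ∈ univ.erase k, y j‖ ^ 2 := by gcongr; exact hQ _ _
      _ = ‖(#(univ.erase k) : ℝ)⁻¹ • ∑ j ∈ univ.erase k, (x j - y j)‖ ^ 2 := by
          rw [← smul_sub, ← sum_sub_distrib]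
      _ ≤ _ := norm_inv_card_smul_sum_sq_le _ _
  have hconst : 1 + ((m : ℝ) - 1)⁻¹ = m / (m - 1) := by field_simp; ring
  rw [hconst] at hsq
  rw [← Real.sqrt_sq (norm_nonneg (x - y)), ← Real.sqrt_mul (by positivity)]
  exact Real.le_sqrt_of_sq_le hsq

/-- With equal weights `1/m` and nonexpansive `Q₁, …, Q_m`, each
`J_k ∘ R_k` is Lipschitz with constant `√(m/(m−1))`, and the composition
`T = (J_m ∘ R_m) ∘ ⋯ ∘ (J_1 ∘ R_1)` is Lipschitz with constant `(m/(m−1))^{m/2}`. -/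
theorem JkRk_lipschitz_and_composition_lipschitz
    {X : Type*} [NormedAddCommGroup X] [InnerProductSpace ℝ X]
    (m : ℕ) (hm : 2 ≤ m)
    (Q : Fin m → X → X)
    (hQ : ∀ i x y, ‖Q i x - Q i y‖ ≤ ‖x - y‖)
    (JR : Fin m → PiLp 2 (fun _ : Fin m => X) → PiLp 2 (fun _ : Fin m => X))
    (hJR : ∀ k x i, JR k x i =
      if i = k then Q k (((m : ℝ) - 1)⁻¹ • ∑ j ∈ Finset.univ.erase k, x j) else x i) :
    (∀ k x y, ‖JR k x - JR k y‖ ≤ Real.sqrt ((m : ℝ) / ((m : ℝ) - 1)) * ‖x - y‖) ∧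
      (∀ x y,
        ‖List.foldl (fun z k => JR k z) x (List.finRange m)
            - List.foldl (fun z k => JR k z) y (List.finRange m)‖
          ≤ ((m : ℝ) / ((m : ℝ) - 1)) ^ ((m : ℝ) / 2) * ‖x - y‖) := by
  set c : ℝ := m / (m - 1)
  have hstep : ∀ k x y, ‖JR k x - JR k y‖ ≤ √c * ‖x - y‖ := fun k =>
    norm_sub_le_of_replace_coord_by_average hm (hQ k) (hJR k)
  refine ⟨hstep, fun x y => ?_⟩
  have hsqrt : ((√c).toNNReal : ℝ) = √c := Real.coe_toNNReal _ (Real.sqrt_nonneg c)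
  have hLip : ∀ k, LipschitzWith (√c).toNNReal (JR k) := fun k =>
    lipschitzWith_iff_norm_sub_le.2 fun x y => by rw [hsqrt]; exact hstep k x y
  have hc : 0 ≤ c :=
    div_nonneg m.cast_nonneg (sub_nonneg.2 (by exact_mod_cast (by omega : 1 ≤ m)))
  have hpow : √c ^ m = c ^ ((m : ℝ) / 2) := by
    rw [Real.sqrt_eq_rpow, ← Real.rpow_mul_natCast hc]; ring_nf
  have hfold := (LipschitzWith.list_foldl hLip (List.finRange m)).norm_sub_le x y
  rwa [List.length_finRange, NNReal.coe_pow, hsqrt, hpow] at hfold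
end
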